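/- The elements δ_m = i^m j^m of A₀, for m ≥ 1, pairwise commute and are algebraically independent over ℚ; that is, the unital subalgebra of A₀ generated by {i^m j^m : m ≥ 1} is isomorphic to a commutative polynomial ring over ℚ in countably infinitely many variables, one for each m ≥ 1. -/

import Mathlib

open FreeAlgebra

noncomputable section

/-- Defining relations for the specialisation at `q = 0` of the generic composition
algebra of the Kronecker quiver, on generators `i = ι ℚ 0` and `j = ι ℚ 1`:
(1) `i^m j^(m+1) i^(m+1) j^(m+2) = i^(2m+1) j^(2m+3)` for all `m ≥ 0`;
(2) `i^(n+2) j^(n+1) i^(n+1) j^n = i^(2n+3) j^(2n+1)` for all `n ≥ 0`;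
(3) `(i^m j^m)(i^n j^n) = (i^n j^n)(i^m j^m)` for all `m, n ≥ 1`. -/
inductive KroneckerRel0 : FreeAlgebra ℚ (Fin 2) → FreeAlgebra ℚ (Fin 2) → Prop
  | preproj (m : ℕ) :
      KroneckerRel0
        (ι ℚ 0 ^ m * ι ℚ 1 ^ (m + 1) * (ι ℚ 0 ^ (m + 1) * ι ℚ 1 ^ (m + 2)))
        (ι ℚ 0 ^ (2 * m + 1) * ι ℚ 1 ^ (2 * m + 3))
  | preinj (n : ℕ) :
      KroneckerRel0
        (ι ℚ 0 ^ (n + 2) * ι ℚ 1 ^ (n + 1) * (ι ℚ 0 ^ (n + 1) * ι ℚ 1 ^ n))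
        (ι ℚ 0 ^ (2 * n + 3) * ι ℚ 1 ^ (2 * n + 1))
  | deltaComm (m n : ℕ) (hm : 1 ≤ m) (hn : 1 ≤ n) :
      KroneckerRel0
        (ι ℚ 0 ^ m * ι ℚ 1 ^ m * (ι ℚ 0 ^ n * ι ℚ 1 ^ n))
        (ι ℚ 0 ^ n * ι ℚ 1 ^ n * (ι ℚ 0 ^ m * ι ℚ 1 ^ m))

/-- `A₀`, the composition algebra of the Kronecker quiver specialised at `q = 0`,
presented by generators `i, j` and the relations above. -/
abbrev A0 : Type := RingQuot KroneckerRel0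

/-- The generator `i` of `A₀`. -/
def iA : A0 := RingQuot.mkAlgHom ℚ KroneckerRel0 (ι ℚ 0)

/-- The generator `j` of `A₀`. -/
def jA : A0 := RingQuot.mkAlgHom ℚ KroneckerRel0 (ι ℚ 1)

/-- The commutator `ij - ji` in `A₀`. -/
def cA : A0 := iA * jA - jA * iA

/-- `P(m) = (ij - ji)^m j` in `A₀`. -/
def PA (m : ℕ) : A0 := cA ^ m * jA

/-- `I(n) = i (ij - ji)^n` in `A₀`. -/
def IA (n : ℕ) : A0 := iA * cA ^ n

/-- `R(1) = ij - ji` and `R(s+1) = i (ij - ji)^s j` for `s ≥ 1` in `A₀`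
(the value at `0` is junk). -/
def RA : ℕ → A0
  | 0 => 0
  | 1 => cA
  | (s + 2) => iA * cA ^ (s + 1) * jA

/-- `δ_m = i^m j^m` in `A₀`. -/
def deltaA (m : ℕ) : A0 := iA ^ m * jA ^ m

/-!
The relations of `A₀` hold in the monoid of self-maps of a small automaton that reads a word in
`i, j` from the right and records every completed block `i^k j^k` in a counter `l : ℕ →₀ ℕ`.
Linearising gives a representation of `A₀` on `ℚ[State]` in which `δ_k` sends the idle state with
record `l` to the idle state with record `l + e_k`. Hence the monomial `∏ δ_k ^ (d k)` sends the
idle state with empty record to the idle state with record `d`: distinct monomials go to distinct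
basis vectors, which is algebraic independence. Commutativity of the `δ_m` is relation (3).
-/

structure SatisfiesKroneckerRel0 {M : Type*} [Monoid M] (a b : M) : Prop where
  preproj (m : ℕ) :
    a ^ m * b ^ (m + 1) * (a ^ (m + 1) * b ^ (m + 2)) = a ^ (2 * m + 1) * b ^ (2 * m + 3)
  preinj (n : ℕ) :
    a ^ (n + 2) * b ^ (n + 1) * (a ^ (n + 1) * b ^ n) = a ^ (2 * n + 3) * b ^ (2 * n + 1)
  deltaComm (m n : ℕ) (hm : 1 ≤ m) (hn : 1 ≤ n) :
    a ^ m * b ^ m * (a ^ n * b ^ n) = a ^ n * b ^ n * (a ^ m * b ^ m)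

namespace SatisfiesKroneckerRel0

theorem map {M N F : Type*} [Monoid M] [Monoid N] [FunLike F M N] [MonoidHomClass F M N]
    (f : F) {a b : M} (h : SatisfiesKroneckerRel0 a b) : SatisfiesKroneckerRel0 (f a) (f b) where
  preproj m := by simpa only [map_mul, map_pow] using congrArg f (h.preproj m)
  preinj n := by simpa only [map_mul, map_pow] using congrArg f (h.preinj n)
  deltaComm m n hm hn := by simpa only [map_mul, map_pow] using congrArg f (h.deltaComm m n hm hn)

variable {B : Type*} [Semiring B] [Algebra ℚ B] {a b : B}

def lift (h : SatisfiesKroneckerRel0 a b) : A0 →ₐ[ℚ] B :=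
  RingQuot.liftAlgHom ℚ ⟨FreeAlgebra.lift ℚ ![a, b], fun x y hxy => by
    cases hxy with
    | preproj m => simpa using h.preproj m
    | preinj n => simpa using h.preinj n
    | deltaComm m n hm hn => simpa using h.deltaComm m n hm hn⟩

theorem lift_iA (h : SatisfiesKroneckerRel0 a b) : h.lift iA = a := by
  simp [lift, iA]

theorem lift_jA (h : SatisfiesKroneckerRel0 a b) : h.lift jA = b := by
  simp [lift, jA]

end SatisfiesKroneckerRel0

theorem satisfiesKroneckerRel0_iA_jA : SatisfiesKroneckerRel0 iA jA := by
  refine ⟨fun m => ?_, fun n => ?_, fun m n hm hn => ?_⟩ <;>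
    simp only [iA, jA, ← map_pow, ← map_mul] <;>
    exact RingQuot.mkAlgHom_rel ℚ (by constructor <;> assumption)

namespace A0

/-- Words act from the right. `idle l`: between blocks, `l k` of the blocks `i^k j^k` completed
so far; `busy l p s`: inside a block, with `p + 1` unmatched `j`s and `s` matching `i`s read;
`dead`: an `i` was read with no `j` pending. -/
inductive State
  | idle (l : ℕ →₀ ℕ)
  | busy (l : ℕ →₀ ℕ) (p s : ℕ)
  | dead

namespace State

open Finsupp (single)

def stepI : Function.End State
  | idle _ => dead
  | busy l 0 s => idle (l + single (s + 1) 1)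
  | busy l (p + 1) s => busy l p (s + 1)
  | dead => dead

def stepJ : Function.End State
  | idle l => busy l 0 0
  | busy l p s => busy l (p + 1) s
  | dead => dead

theorem stepI_pow_smul_dead (n : ℕ) : stepI ^ n • dead = dead := Function.iterate_fixed rfl n

theorem stepJ_pow_smul_dead (n : ℕ) : stepJ ^ n • dead = dead := Function.iterate_fixed rfl n

theorem stepJ_pow_smul_busy (l : ℕ →₀ ℕ) (p s q : ℕ) :
    stepJ ^ q • busy l p s = busy l (p + q) s := by
  induction q generalizing p with
  | zero => rfl
  | succ q ih =>
    rw [pow_succ, mul_smul]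
    exact (ih (p + 1)).trans (by rw [add_right_comm, add_assoc])

theorem stepJ_pow_smul_idle (l : ℕ →₀ ℕ) {q : ℕ} (hq : 0 < q) :
    stepJ ^ q • idle l = busy l (q - 1) 0 := by
  obtain ⟨q, rfl⟩ : ∃ q', q = q' + 1 := ⟨q - 1, by omega⟩
  rw [pow_succ, mul_smul]
  exact (stepJ_pow_smul_busy l 0 0 q).trans (by rw [zero_add, Nat.add_sub_cancel])

theorem stepI_pow_smul_busy_of_le (l : ℕ →₀ ℕ) {p s k : ℕ} (hk : k ≤ p) :
    stepI ^ k • busy l p s = busy l (p - k) (s + k) := by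
  induction k generalizing p s with
  | zero => rfl
  | succ k ih =>
    obtain ⟨p, rfl⟩ : ∃ p', p = p' + 1 := ⟨p - 1, by omega⟩
    rw [pow_succ, mul_smul]
    exact (ih (by omega)).trans (by congr 1 <;> omega)

theorem stepI_pow_smul_busy_of_eq (l : ℕ →₀ ℕ) {p s k : ℕ} (hk : k = p + 1) :
    stepI ^ k • busy l p s = idle (l + single (s + k) 1) := by
  subst hk
  rw [pow_succ', mul_smul, stepI_pow_smul_busy_of_le l le_rfl, Nat.sub_self, ← add_assoc]
  rfl

theorem stepI_pow_smul_idle (l : ℕ →₀ ℕ) {k : ℕ} (hk : 0 < k) : stepI ^ k • idle l = dead := by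
  obtain ⟨k, rfl⟩ : ∃ k', k = k' + 1 := ⟨k - 1, by omega⟩
  rw [pow_succ, mul_smul]
  exact stepI_pow_smul_dead k

theorem stepI_pow_smul_busy_of_lt (l : ℕ →₀ ℕ) {p s k : ℕ} (hk : p + 1 < k) :
    stepI ^ k • busy l p s = dead := by
  obtain ⟨k, rfl⟩ : ∃ k', k = k' + 1 + (p + 1) := ⟨k - (p + 2), by omega⟩
  rw [pow_add, mul_smul, stepI_pow_smul_busy_of_eq l rfl]
  exact stepI_pow_smul_idle _ k.succ_pos

theorem delta_smul_idle (l : ℕ →₀ ℕ) {k : ℕ} (hk : 0 < k) :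
    (stepI ^ k * stepJ ^ k) • idle l = idle (l + single k 1) := by
  rw [mul_smul, stepJ_pow_smul_idle l hk, stepI_pow_smul_busy_of_eq l (by omega), zero_add]

theorem delta_smul_busy (l : ℕ →₀ ℕ) (p s k : ℕ) :
    (stepI ^ k * stepJ ^ k) • busy l p s = busy l p (s + k) := by
  rw [mul_smul, stepJ_pow_smul_busy, stepI_pow_smul_busy_of_le l (by omega), Nat.add_sub_cancel]

theorem delta_pow_smul_idle (l : ℕ →₀ ℕ) {k : ℕ} (hk : 0 < k) (n : ℕ) :
    (stepI ^ k * stepJ ^ k) ^ n • idle l = idle (l + single k n) := by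
  induction n generalizing l with
  | zero => simp
  | succ n ih => rw [pow_succ, mul_smul, delta_smul_idle l hk, ih, add_assoc,
      ← Finsupp.single_add, add_comm 1 n]

theorem satisfiesKroneckerRel0 : SatisfiesKroneckerRel0 stepI stepJ where
  preproj m := eq_of_smul_eq_smul fun x : State => by
    simp only [mul_smul]
    cases x with
    | dead => simp only [stepI_pow_smul_dead, stepJ_pow_smul_dead]
    | idle l =>
      simp (disch := omega) only [stepJ_pow_smul_idle, stepI_pow_smul_busy_of_le,
        stepJ_pow_smul_busy]
      congr 1 <;> omega
    | busy l p s =>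
      simp (disch := omega) only [stepI_pow_smul_busy_of_le, stepJ_pow_smul_busy]
      congr 1 <;> omega
  preinj n := eq_of_smul_eq_smul fun x : State => by
    simp only [mul_smul]
    cases x with
    | dead => simp only [stepI_pow_smul_dead, stepJ_pow_smul_dead]
    | idle l =>
      rcases n with _ | n <;>
      simp (disch := omega) only [pow_zero, one_smul, stepJ_pow_smul_idle, stepI_pow_smul_idle,
        stepI_pow_smul_busy_of_lt, stepI_pow_smul_dead, stepJ_pow_smul_dead]
    | busy l p s =>
      rcases p with _ | _ | p <;>
      simp (disch := omega) only [stepJ_pow_smul_busy, stepJ_pow_smul_idle,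
        stepI_pow_smul_busy_of_le, stepI_pow_smul_busy_of_eq, stepI_pow_smul_busy_of_lt]
      · congr 3; omega
      · congr 1 <;> omega
  deltaComm m n hm hn := eq_of_smul_eq_smul fun x : State => by
    rw [mul_smul (_ * _), mul_smul (_ * _)]
    cases x with
    | dead => simp only [mul_smul, stepI_pow_smul_dead, stepJ_pow_smul_dead]
    | idle l => rw [delta_smul_idle l hn, delta_smul_idle _ hm, delta_smul_idle l hm,
        delta_smul_idle _ hn, add_right_comm]
    | busy l p s => rw [delta_smul_busy, delta_smul_busy, delta_smul_busy, delta_smul_busy,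
        add_right_comm]

end State

open State MvPolynomial

def stateRep : A0 →ₐ[ℚ] Module.End ℚ (MonoidAlgebra ℚ State) :=
  (State.satisfiesKroneckerRel0.map (Representation.ofMulAction ℚ (Function.End State) State)).lift

theorem stateRep_deltaA_pow_idle (l : ℕ →₀ ℕ) {k : ℕ} (hk : 0 < k) (n : ℕ) :
    stateRep (deltaA k ^ n) (MonoidAlgebra.single (idle l) 1) =
      MonoidAlgebra.single (idle (l + Finsupp.single k n)) 1 := by
  rw [deltaA, stateRep, map_pow, map_mul, map_pow, map_pow, SatisfiesKroneckerRel0.lift_iA,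
    SatisfiesKroneckerRel0.lift_jA, ← map_pow, ← map_pow, ← map_mul, ← map_pow,
    Representation.ofMulAction_single, delta_pow_smul_idle l hk]

def deltaSet : Set A0 := {x | ∃ m : ℕ, 1 ≤ m ∧ x = deltaA m}

instance : IsMulCommutative (Algebra.adjoin ℚ deltaSet) :=
  Algebra.isMulCommutative_adjoin ℚ <| by
    rintro _ ⟨m, hm, rfl⟩ _ ⟨n, hn, rfl⟩
    exact satisfiesKroneckerRel0_iA_jA.deltaComm m n hm hn

open scoped IsMulCommutative in
def deltaPoly : MvPolynomial {k : ℕ // 1 ≤ k} ℚ →ₐ[ℚ] A0 :=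
  (Algebra.adjoin ℚ deltaSet).val.comp
    (aeval fun k => ⟨deltaA k, Algebra.subset_adjoin ⟨k, k.2, rfl⟩⟩)

theorem deltaPoly_X (k : {k : ℕ // 1 ≤ k}) : deltaPoly (X k) = deltaA k := by
  simp [deltaPoly]

open scoped IsMulCommutative in
theorem range_deltaPoly : deltaPoly.range = Algebra.adjoin ℚ deltaSet := by
  rw [deltaPoly, AlgHom.range_comp, ← Algebra.adjoin_range_eq_range_aeval, AlgHom.map_adjoin]
  congr 1
  ext x
  constructor
  · rintro ⟨_, ⟨k, rfl⟩, rfl⟩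
    exact ⟨k, k.2, rfl⟩
  · rintro ⟨m, hm, rfl⟩
    exact ⟨_, ⟨⟨m, hm⟩, rfl⟩, rfl⟩

theorem stateRep_deltaPoly_monomial (d : {k : ℕ // 1 ≤ k} →₀ ℕ) (l : ℕ →₀ ℕ) :
    stateRep (deltaPoly (monomial d 1)) (MonoidAlgebra.single (idle l) 1) =
      MonoidAlgebra.single (idle (l + d.mapDomain Subtype.val)) 1 := by
  induction d using Finsupp.induction generalizing l with
  | zero => simp
  | single_add k n d _ _ ih =>
    rw [monomial_single_add, map_mul, map_mul, Module.End.mul_apply, ih, map_pow, deltaPoly_X,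
      stateRep_deltaA_pow_idle _ k.2, Finsupp.mapDomain_add, Finsupp.mapDomain_single,
      add_assoc, add_comm (Finsupp.single _ _)]

theorem deltaPoly_injective : Function.Injective deltaPoly := by
  let evalIdle : MvPolynomial {k : ℕ // 1 ≤ k} ℚ →ₗ[ℚ] MonoidAlgebra ℚ State :=
    LinearMap.applyₗ (MonoidAlgebra.single (idle 0) 1) ∘ₗ (stateRep.comp deltaPoly).toLinearMap
  have h_basis : evalIdle ∘ (basisMonomials _ ℚ) =
      MonoidAlgebra.basis State ℚ ∘ fun d => idle (d.mapDomain Subtype.val) := by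
    ext1 d
    simp [evalIdle, stateRep_deltaPoly_monomial]
  have h_inj : Function.Injective evalIdle := by
    refine LinearMap.injective_of_linearIndependent (basisMonomials _ ℚ).span_eq ?_
    rw [h_basis]
    have h_idle : Function.Injective idle := fun _ _ h => State.idle.inj h
    exact (MonoidAlgebra.basis State ℚ).linearIndependent.comp _
      (h_idle.comp (Finsupp.mapDomain_injective Subtype.val_injective))
  exact Function.Injective.of_comp (f := fun a => stateRep a (MonoidAlgebra.single (idle 0) 1)) h_inj

end A0

theorem deltas_polynomial_algebra :
    (∀ m n : ℕ, 1 ≤ m → 1 ≤ n →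
      (iA ^ m * jA ^ m) * (iA ^ n * jA ^ n) = (iA ^ n * jA ^ n) * (iA ^ m * jA ^ m)) ∧
    ∃ f : MvPolynomial {k : ℕ // 1 ≤ k} ℚ →ₐ[ℚ] A0,
      Function.Injective f ∧
      (∀ k : {k : ℕ // 1 ≤ k}, f (MvPolynomial.X k) = iA ^ (k : ℕ) * jA ^ (k : ℕ)) ∧
      f.range = Algebra.adjoin ℚ {x : A0 | ∃ m : ℕ, 1 ≤ m ∧ x = iA ^ m * jA ^ m} :=
  ⟨satisfiesKroneckerRel0_iA_jA.deltaComm, A0.deltaPoly, A0.deltaPoly_injective, A0.deltaPoly_X,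
    A0.range_deltaPoly⟩
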